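/- The polar transform L ↦ L° is continuous as a map from the family of compact convex subsets of ℝ^d containing the origin in their interior to itself, where this family is equipped with the Hausdorff metric: if compact convex sets L_n with 0 in their interiors converge in the Hausdorff metric to a compact convex set L with 0 in its interior, then L_n° → L° in the Hausdorff metric. -/

import Mathlib

open Set Filter Topology Pointwise

noncomputable section

abbrev Euc (d : ℕ) := EuclideanSpace ℝ (Fin d)

/-- The polar set `L° = { x : ⟨x,y⟩ ≤ 1 ∀ y ∈ L }`. -/
def polarSet {d : ℕ} (L : Set (Euc d)) : Set (Euc d) :=
  {x | ∀ y ∈ L, (inner ℝ x y : ℝ) ≤ 1}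

lemma polar_norm_le {d : ℕ} {B : Set (Euc d)} {ρ : ℝ} (hρ : 0 < ρ)
    (hB : Metric.closedBall 0 ρ ⊆ B) {x : Euc d} (hx : x ∈ polarSet B) :
    ‖x‖ ≤ 1 / ρ := by
  rcases eq_or_ne x 0 with rfl | hx0
  · simp; positivity
  · have hxn : 0 < ‖x‖ := norm_pos_iff.mpr hx0
    have hnorm : ‖(ρ / ‖x‖) • x‖ = ρ := by
      rw [norm_smul, Real.norm_eq_abs, abs_of_pos (div_pos hρ hxn),
        div_mul_cancel₀ _ hxn.ne']
    have hy : (ρ / ‖x‖) • x ∈ B := by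
      apply hB
      simp [Metric.mem_closedBall, dist_eq_norm, hnorm]
    have h1 : (inner ℝ x ((ρ / ‖x‖) • x) : ℝ) ≤ 1 := hx _ hy
    rw [real_inner_smul_right, real_inner_self_eq_norm_sq] at h1
    have hkey : ρ * ‖x‖ ≤ 1 := by
      have heq : ρ / ‖x‖ * ‖x‖ ^ 2 = ρ * ‖x‖ := by field_simp
      linarith [heq ▸ h1]
    rw [le_div_iff₀ hρ]
    nlinarith

lemma polar_approx {d : ℕ} {A B : Set (Euc d)} {ρ ε : ℝ} (hρ : 0 < ρ) (hε : 0 ≤ ε)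
    (hB : Metric.closedBall 0 ρ ⊆ B) (h : ∀ a ∈ A, ∃ b ∈ B, dist a b ≤ ε) :
    ∀ x ∈ polarSet B, ∃ z ∈ polarSet A, dist x z ≤ ε / ρ ^ 2 := by
  intro x hx
  have hxn : ‖x‖ ≤ 1 / ρ := polar_norm_le hρ hB hx
  set t : ℝ := ρ / (ρ + ε) with ht
  have hρε : 0 < ρ + ε := by linarith
  have ht0 : 0 < t := div_pos hρ hρε
  have ht1 : t ≤ 1 := by rw [div_le_one hρε]; linarith
  refine ⟨t • x, ?_, ?_⟩
  · intro a ha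
    obtain ⟨b, hb, hab⟩ := h a ha
    have h1 : (inner ℝ x b : ℝ) ≤ 1 := hx b hb
    have h2 : (inner ℝ x (a - b) : ℝ) ≤ ‖x‖ * ‖a - b‖ := real_inner_le_norm x (a - b)
    have h3 : ‖a - b‖ ≤ ε := by rw [← dist_eq_norm]; exact hab
    have h4 : (inner ℝ x a : ℝ) ≤ 1 + ε / ρ := by
      have hxx : ‖x‖ * ‖a - b‖ ≤ (1 / ρ) * ε :=
        mul_le_mul hxn h3 (norm_nonneg _) (by positivity)
      have : (inner ℝ x a : ℝ) = inner ℝ x b + inner ℝ x (a - b) := by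
        rw [inner_sub_right]; ring
      rw [this]
      have : (1 : ℝ) / ρ * ε = ε / ρ := by ring
      linarith [this ▸ hxx]
    show (inner ℝ (t • x) a : ℝ) ≤ 1
    rw [real_inner_smul_left]
    calc t * inner ℝ x a ≤ t * (1 + ε / ρ) := by
          apply mul_le_mul_of_nonneg_left h4 ht0.le
    _ = 1 := by rw [ht]; field_simp
  · have : dist x (t • x) = (1 - t) * ‖x‖ := by
      rw [dist_eq_norm]
      have : x - t • x = (1 - t) • x := by module
      rw [this, norm_smul, Real.norm_eq_abs, abs_of_nonneg (by linarith)]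
    rw [this]
    have h1t : 1 - t = ε / (ρ + ε) := by rw [ht]; field_simp; ring
    have hxnn : 0 ≤ ‖x‖ := norm_nonneg _
    calc (1 - t) * ‖x‖ ≤ (ε / (ρ + ε)) * (1 / ρ) := by
          rw [h1t]; exact mul_le_mul le_rfl hxn hxnn (by positivity)
    _ ≤ ε / ρ ^ 2 := by
          rw [div_mul_div_comm, mul_one]
          apply div_le_div_of_nonneg_left hε (by positivity)
          nlinarith
    
lemma ball_subset_of_close {d : ℕ} {K L₀ : Set (Euc d)} {r : ℝ} (hr : 0 < r)
    (hK : IsCompact K) (hKc : Convex ℝ K) (hKne : K.Nonempty) (hL₀ne : L₀.Nonempty)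
    (hL₀b : Bornology.IsBounded L₀)
    (hball : Metric.closedBall 0 r ⊆ L₀)
    (hd : Metric.hausdorffDist K L₀ < r / 2) :
    Metric.closedBall 0 (r / 2) ⊆ K := by
  intro x hxball
  by_contra hx
  obtain ⟨f, u, hfu, hux⟩ :=
    geometric_hahn_banach_closed_point hKc hK.isClosed hx
  set v : Euc d := (InnerProductSpace.toDual ℝ (Euc d)).symm f with hv
  have hfv : ∀ y : Euc d, f y = (inner ℝ v y : ℝ) := fun y =>
    (InnerProductSpace.toDual_symm_apply (𝕜 := ℝ) (E := Euc d) (x := y) (y := f)).symm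
  have hvne : v ≠ 0 := by
    obtain ⟨a, ha⟩ := hKne
    intro h0
    have := hfu a ha
    have h1 : f a = 0 := by rw [hfv, h0, inner_zero_left]
    have h2 : f x = 0 := by rw [hfv, h0, inner_zero_left]
    linarith [h1 ▸ this, h2 ▸ hux]
  have hvn : 0 < ‖v‖ := norm_pos_iff.mpr hvne
  set y : Euc d := (r / ‖v‖) • v with hy
  have hyL : y ∈ L₀ := by
    apply hball
    have hnorm : ‖y‖ = r := by
      rw [hy, norm_smul, Real.norm_eq_abs, abs_of_pos (div_pos hr hvn),
        div_mul_cancel₀ _ hvn.ne']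
    simp [Metric.mem_closedBall, dist_eq_norm, hnorm]
  have hfin : EMetric.hausdorffEdist L₀ K ≠ ⊤ :=
    Metric.hausdorffEdist_ne_top_of_nonempty_of_bounded hL₀ne hKne hL₀b hK.isBounded
  have hd' : Metric.hausdorffDist L₀ K < r / 2 := by
    rwa [Metric.hausdorffDist_comm]
  obtain ⟨b, hbK, hby⟩ := Metric.exists_dist_lt_of_hausdorffDist_lt hyL hd' hfin
  have hfy : f y = r * ‖v‖ := by
    rw [hfv, hy, real_inner_smul_right, real_inner_self_eq_norm_sq]
    field_simp
  have hfb : f b > r * ‖v‖ / 2 := by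
    have h2 : (inner ℝ v (b - y) : ℝ) ≥ -(‖v‖ * ‖b - y‖) := by
      have := abs_real_inner_le_norm v (b - y)
      have := abs_le.mp this
      linarith [this.1]
    have h3 : ‖b - y‖ < r / 2 := by
      rw [← dist_eq_norm, dist_comm]; exact hby
    have : f b = f y + inner ℝ v (b - y) := by
      rw [hfv, hfv, inner_sub_right]; ring
    rw [this, hfy]
    nlinarith
  have hfx : f x ≤ ‖v‖ * (r / 2) := by
    rw [hfv]
    calc (inner ℝ v x : ℝ) ≤ ‖v‖ * ‖x‖ := real_inner_le_norm v x
    _ ≤ ‖v‖ * (r / 2) := by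
        apply mul_le_mul_of_nonneg_left _ hvn.le
        simpa [Metric.mem_closedBall, dist_eq_norm] using hxball
  have := hfu b hbK
  nlinarith

/-- If compact convex sets `L_n` with `0` in their interiors converge in the
Hausdorff metric to a compact convex `L` with `0 ∈ Int L`, then `L_n° → L°` in
the Hausdorff metric. -/
theorem hausdorff_polar_of_hausdorff {d : ℕ} (L : ℕ → Set (Euc d))
    (L₀ : Set (Euc d))
    (hLcomp : ∀ n, IsCompact (L n)) (hLconv : ∀ n, Convex ℝ (L n))
    (hL0 : ∀ n, (0 : Euc d) ∈ interior (L n))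
    (hL₀comp : IsCompact L₀) (hL₀conv : Convex ℝ L₀)
    (hL₀0 : (0 : Euc d) ∈ interior L₀)
    (hconv : Tendsto (fun n => Metric.hausdorffDist (L n) L₀) atTop (nhds 0)) :
    Tendsto (fun n => Metric.hausdorffDist (polarSet (L n)) (polarSet L₀))
      atTop (nhds 0) := by
  -- get a closed ball inside L₀
  obtain ⟨r2, hr2, hball2⟩ := Metric.mem_nhds_iff.mp
    (mem_interior_iff_mem_nhds.mp hL₀0)
  set r : ℝ := r2 / 2 with hrdef
  have hr : 0 < r := by positivity
  have hball : Metric.closedBall 0 r ⊆ L₀ := by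
    refine subset_trans ?_ hball2
    intro z hz
    have : ‖z‖ ≤ r := by simpa [Metric.mem_closedBall, dist_eq_norm] using hz
    simp only [Metric.mem_ball, dist_eq_norm, sub_zero]
    calc ‖z‖ ≤ r := this
    _ < r2 := by rw [hrdef]; linarith
  have hLne : ∀ n, (L n).Nonempty := fun n => ⟨0, interior_subset (hL0 n)⟩
  have hL₀ne : L₀.Nonempty := ⟨0, interior_subset hL₀0⟩
  -- eventually L n contains closedBall 0 (r/2)
  have hev : ∀ᶠ n in atTop, Metric.hausdorffDist (L n) L₀ < r / 2 :=
    hconv.eventually (gt_mem_nhds (by positivity))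
  have key : ∀ᶠ n in atTop,
      Metric.hausdorffDist (polarSet (L n)) (polarSet L₀)
        ≤ (1 / (r / 2) ^ 2) * Metric.hausdorffDist (L n) L₀ := by
    filter_upwards [hev] with n hn
    have hballn : Metric.closedBall 0 (r / 2) ⊆ L n :=
      ball_subset_of_close hr (hLcomp n) (hLconv n) (hLne n) hL₀ne
        hL₀comp.isBounded hball hn
    have hball₀ : Metric.closedBall 0 (r / 2) ⊆ L₀ :=
      (Metric.closedBall_subset_closedBall (by linarith)).trans hball
    set ε := Metric.hausdorffDist (L n) L₀ with hε
    have hε0 : 0 ≤ ε := Metric.hausdorffDist_nonneg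
    have hfin : EMetric.hausdorffEdist (L n) L₀ ≠ ⊤ :=
      Metric.hausdorffEdist_ne_top_of_nonempty_of_bounded (hLne n) hL₀ne
        (hLcomp n).isBounded hL₀comp.isBounded
    have hAB : ∀ a ∈ L n, ∃ b ∈ L₀, dist a b ≤ ε := by
      intro a ha
      obtain ⟨b, hb, hab⟩ := hL₀comp.exists_infDist_eq_dist hL₀ne a
      exact ⟨b, hb, hab ▸ Metric.infDist_le_hausdorffDist_of_mem ha hfin⟩
    have hBA : ∀ b ∈ L₀, ∃ a ∈ L n, dist b a ≤ ε := by
      intro b hb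
      obtain ⟨a, ha, hba⟩ := (hLcomp n).exists_infDist_eq_dist (hLne n) b
      refine ⟨a, ha, hba ▸ ?_⟩
      have h := Metric.infDist_le_hausdorffDist_of_mem hb
        (by rw [EMetric.hausdorffEdist_comm]; exact hfin)
      rwa [Metric.hausdorffDist_comm] at h
    have h1 := polar_approx (by positivity : (0:ℝ) < r / 2) hε0 hballn hBA
    have h2 := polar_approx (by positivity : (0:ℝ) < r / 2) hε0 hball₀ hAB
    have := Metric.hausdorffDist_le_of_mem_dist
      (show (0:ℝ) ≤ ε / (r/2)^2 by positivity)
      (fun x hx => h1 x hx) (fun y hy => h2 y hy)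
    calc Metric.hausdorffDist (polarSet (L n)) (polarSet L₀) ≤ ε / (r/2)^2 := this
    _ = (1 / (r / 2) ^ 2) * ε := by ring
  have hg : Tendsto (fun n => (1 / (r / 2) ^ 2) * Metric.hausdorffDist (L n) L₀)
      atTop (nhds 0) := by
    have := hconv.const_mul (1 / (r / 2) ^ 2)
    rwa [mul_zero] at this
  exact squeeze_zero' (Eventually.of_forall fun n => Metric.hausdorffDist_nonneg)
    key hg
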